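/- Let R be a finite reduced root system in a finite-dimensional real vector space V, and let R′ ⊆ R be a subset with R′ = −R′ that is closed under its own reflections: for all α, β ∈ R′, s_α(β) ∈ R′, where s_α is the reflection of V attached to α in R. Let R⁺ be a positive system of R and let α ∈ R′ be a simple root of R′ with respect to the positive system R′ ∩ R⁺. Then there exists a positive system R₁⁺ of R such that R′ ∩ R₁⁺ = R′ ∩ R⁺ and α is a simple root of R with respect to R₁⁺. -/

import Mathlib

/-- A positive system of a finite root system `R` in a real vector space: a subset of
the form `{β ∈ R : f β > 0}` for a linear functional `f` nonvanishing on `R`. -/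
def IsPositiveSystem {V : Type*} [AddCommGroup V] [Module ℝ V]
    (R P : Set V) : Prop :=
  ∃ f : V →ₗ[ℝ] ℝ, (∀ β ∈ R, f β ≠ 0) ∧ P = {β ∈ R | 0 < f β}

/-- `α` is a simple root of a positive system `P`: it belongs to `P` and is not the
sum of two elements of `P`. -/
def IsSimpleRoot {V : Type*} [AddCommGroup V] [Module ℝ V]
    (P : Set V) (α : V) : Prop :=
  α ∈ P ∧ ¬ ∃ β ∈ P, ∃ γ ∈ P, α = β + γ

namespace RootSysAux

variable {V : Type*} [AddCommGroup V] [Module ℝ V]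

/-- The reflection attached to a functional `c` and vector `γ`, as a linear map. -/
noncomputable def reflMap (c : V →ₗ[ℝ] ℝ) (γ : V) : V →ₗ[ℝ] V :=
  LinearMap.id - c.smulRight γ

lemma reflMap_apply (c : V →ₗ[ℝ] ℝ) (γ x : V) : reflMap c γ x = x - c x • γ := rfl

lemma reflMap_invol (c : V →ₗ[ℝ] ℝ) {γ : V} (h2 : c γ = 2) (x : V) :
    reflMap c γ (reflMap c γ x) = x := by
  simp only [reflMap_apply, map_sub, map_smul, h2, smul_eq_mul]
  module

/-- No infinite orbits in a finite set. -/
lemma no_orbit (R : Finset V) {v : V} (hv : v ≠ 0) (β : V)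
    (h : ∀ j : ℕ, β + (j : ℝ) • v ∈ R) : False := by
  have hinj : Function.Injective (fun j : ℕ => β + (j : ℝ) • v) := by
    intro a b hab
    simp only [add_right_inj] at hab
    have h1 : ((a : ℝ) - b) • v = 0 := by rw [sub_smul, hab, sub_self]
    rcases smul_eq_zero.mp h1 with h2 | h2
    · have : (a : ℝ) = (b : ℝ) := sub_eq_zero.mp h2
      exact_mod_cast this
    · exact absurd h2 hv
  exact Set.infinite_of_injective_forall_mem hinj (fun j => h j) R.finite_toSet

/-- Uniqueness of coroot functionals on roots. -/
lemma coroot_unique (R : Finset V) (coroot : V → V →ₗ[ℝ] ℝ)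
    (hzero : (0 : V) ∉ R)
    (hpair : ∀ α ∈ R, coroot α α = 2)
    (hrefl : ∀ α ∈ R, ∀ β ∈ R, β - coroot α β • α ∈ R)
    {γ : V} (hγ : γ ∈ R) (g : V →ₗ[ℝ] ℝ) (hg2 : g γ = 2)
    (hgR : ∀ β ∈ R, β - g β • γ ∈ R) {β : V} (hβ : β ∈ R) :
    g β = coroot γ β := by
  by_contra hne
  have htne : g β - coroot γ β ≠ 0 := sub_ne_zero.mpr hne
  have hγ0 : γ ≠ 0 := fun h => hzero (h ▸ hγ)
  have hu : ∀ x ∈ R, x + (g x - coroot γ x) • γ ∈ R := by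
    intro x hx
    have h2 := hrefl γ hγ _ (hgR x hx)
    have heq : (x - g x • γ) - coroot γ (x - g x • γ) • γ
        = x + (g x - coroot γ x) • γ := by
      simp only [map_sub, map_smul, hpair γ hγ, smul_eq_mul]
      module
    rwa [heq] at h2
  have horb : ∀ j : ℕ, β + (j : ℝ) • ((g β - coroot γ β) • γ) ∈ R := by
    intro j
    induction j with
    | zero => simpa using hβ
    | succ n ih =>
      have h3 := hu _ ih
      have heq : β + (n : ℝ) • (g β - coroot γ β) • γ
            + (g (β + (n : ℝ) • (g β - coroot γ β) • γ)
              - coroot γ (β + (n : ℝ) • (g β - coroot γ β) • γ)) • γ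
          = β + ((n : ℝ) + 1) • (g β - coroot γ β) • γ := by
        simp only [map_add, map_smul, hg2, hpair γ hγ, smul_eq_mul]
        module
      rw [heq] at h3
      simpa [Nat.cast_succ] using h3
  exact no_orbit R (smul_ne_zero htne hγ0) β horb


section
variable (R : Finset V) (coroot : V → V →ₗ[ℝ] ℝ)

/-- Averaged bilinear form. -/
noncomputable def BF (x y : V) : ℝ := ∑ δ ∈ R, coroot δ x * coroot δ y

variable {R coroot}

lemma BF_symm (x y : V) : BF R coroot x y = BF R coroot y x :=
  Finset.sum_congr rfl fun δ _ => mul_comm _ _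

lemma BF_self_nonneg (x : V) : 0 ≤ BF R coroot x x :=
  Finset.sum_nonneg fun δ _ => mul_self_nonneg _

lemma BF_pos_self (hpair : ∀ α ∈ R, coroot α α = 2) {β : V} (hβ : β ∈ R) :
    0 < BF R coroot β β := by
  have h1 : coroot β β * coroot β β ≤ BF R coroot β β :=
    Finset.single_le_sum (fun δ _ => mul_self_nonneg (coroot δ β)) hβ
  rw [hpair β hβ] at h1
  linarith

variable (hzero : (0 : V) ∉ R)
  (hpair : ∀ α ∈ R, coroot α α = 2)
  (hrefl : ∀ α ∈ R, ∀ β ∈ R, β - coroot α β • α ∈ R)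

include hzero hpair hrefl

lemma coroot_reflect {β γ δ : V} (hβ : β ∈ R) (hγ : γ ∈ R) (hδ : δ ∈ R) :
    coroot (reflMap (coroot γ) γ δ) β = coroot δ (reflMap (coroot γ) γ β) := by
  have hδ' : reflMap (coroot γ) γ δ ∈ R := hrefl γ hγ δ hδ
  have hmemR : ∀ x, x ∈ R → reflMap (coroot γ) γ x ∈ R := fun x hx => hrefl γ hγ x hx
  have h := coroot_unique R coroot hzero hpair hrefl hδ'
    ((coroot δ).comp (reflMap (coroot γ) γ)) ?_ ?_ hβ
  · exact h.symm
  · show coroot δ (reflMap (coroot γ) γ (reflMap (coroot γ) γ δ)) = 2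
    rw [reflMap_invol (coroot γ) (hpair γ hγ) δ]
    exact hpair δ hδ
  · intro x hx
    have heq : x - ((coroot δ).comp (reflMap (coroot γ) γ)) x • reflMap (coroot γ) γ δ
        = reflMap (coroot γ) γ
            ((reflMap (coroot γ) γ x) - coroot δ (reflMap (coroot γ) γ x) • δ) := by
      rw [map_sub, map_smul, reflMap_invol (coroot γ) (hpair γ hγ) x]
      rfl
    rw [heq]
    exact hmemR _ (hrefl δ hδ _ (hmemR x hx))

lemma BF_reflect {β γ : V} (hβ : β ∈ R) (hγ : γ ∈ R) :
    2 * BF R coroot β γ = coroot γ β * BF R coroot γ γ := by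
  have hbij : BF R coroot β γ
      = ∑ δ ∈ R, (coroot δ β - coroot γ β * coroot δ γ) * (-(coroot δ γ)) := by
    refine Finset.sum_nbij' (fun δ => reflMap (coroot γ) γ δ) (fun δ => reflMap (coroot γ) γ δ)
      (fun δ hδ => hrefl γ hγ δ hδ) (fun δ hδ => hrefl γ hγ δ hδ)
      (fun δ _ => reflMap_invol (coroot γ) (hpair γ hγ) δ)
      (fun δ _ => reflMap_invol (coroot γ) (hpair γ hγ) δ) ?_
    intro δ hδ
    have h1 : coroot (reflMap (coroot γ) γ δ) β = coroot δ β - coroot γ β * coroot δ γ := by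
      rw [coroot_reflect hzero hpair hrefl hβ hγ hδ]
      simp [reflMap_apply, map_sub, map_smul, mul_comm]
    have h2 : coroot (reflMap (coroot γ) γ δ) γ = -(coroot δ γ) := by
      rw [coroot_reflect hzero hpair hrefl hγ hγ hδ, reflMap_apply, map_sub, map_smul,
        hpair γ hγ]
      simp only [smul_eq_mul]
      ring
    rw [h1, h2]
    ring
  have hexp : ∑ δ ∈ R, (coroot δ β - coroot γ β * coroot δ γ) * (-(coroot δ γ))
      = -(BF R coroot β γ) + coroot γ β * BF R coroot γ γ := by
    unfold BF
    rw [← Finset.sum_neg_distrib, Finset.mul_sum, ← Finset.sum_add_distrib]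
    exact Finset.sum_congr rfl fun δ _ => by ring
  rw [hexp] at hbij
  linarith

lemma pairing_one (hint : ∀ α ∈ R, ∀ β ∈ R, ∃ n : ℤ, coroot α β = (n : ℝ))
    {a b : V} (ha : a ∈ R) (hb : b ∈ R) (hne : b ≠ a) (h2 : 2 ≤ coroot a b) :
    coroot b a = 1 := by
  obtain ⟨n, hn⟩ := hint a ha b hb
  obtain ⟨m, hm⟩ := hint b hb a ha
  have hBa : 0 < BF R coroot a a := BF_pos_self hpair ha
  have hBb : 0 < BF R coroot b b := BF_pos_self hpair hb
  have e1 : 2 * BF R coroot b a = coroot a b * BF R coroot a a :=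
    BF_reflect hzero hpair hrefl hb ha
  have e2 : 2 * BF R coroot a b = coroot b a * BF R coroot b b :=
    BF_reflect hzero hpair hrefl ha hb
  have hsym : BF R coroot a b = BF R coroot b a := BF_symm a b
  have hBba : 0 < BF R coroot b a := by nlinarith
  have hmpos : 0 < (m : ℝ) := by
    rw [← hm]
    nlinarith
  have hm1 : 1 ≤ m := by exact_mod_cast hmpos
  have hn2 : (2 : ℤ) ≤ n := by
    have : (2 : ℝ) ≤ (n : ℝ) := hn ▸ h2
    exact_mod_cast this
  have hcs : (BF R coroot b a) ^ 2 ≤ BF R coroot b b * BF R coroot a a := by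
    have h := Finset.sum_mul_sq_le_sq_mul_sq R (fun δ => coroot δ b) (fun δ => coroot δ a)
    unfold BF
    calc (∑ δ ∈ R, coroot δ b * coroot δ a) ^ 2
        ≤ (∑ δ ∈ R, coroot δ b ^ 2) * ∑ δ ∈ R, coroot δ a ^ 2 := h
      _ = (∑ δ ∈ R, coroot δ b * coroot δ b) * ∑ δ ∈ R, coroot δ a * coroot δ a := by
          simp [pow_two]
  have hnm4 : n * m ≤ 4 := by
    have e1' : 2 * BF R coroot b a = (n : ℝ) * BF R coroot a a := by rw [← hn]; exact e1
    have e2' : 2 * BF R coroot b a = (m : ℝ) * BF R coroot b b := by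
      rw [← hm, ← hsym]; exact e2
    have h4 : ((n : ℝ) * BF R coroot a a) * ((m : ℝ) * BF R coroot b b)
        = (2 * BF R coroot b a) * (2 * BF R coroot b a) := by rw [← e1', ← e2']
    have h5 : (n : ℝ) * m ≤ 4 := by nlinarith [mul_pos hBa hBb, hcs, h4]
    exact_mod_cast h5
  have hcase : m = 1 ∨ (n = 2 ∧ m = 2) := by
    rcases eq_or_lt_of_le hm1 with h | h
    · exact Or.inl h.symm
    · right
      have hm2 : 2 ≤ m := h
      constructor
      · nlinarith
      · nlinarith
  rcases hcase with h | ⟨hn2', hm2'⟩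
  · rw [hm, h, Int.cast_one]
  · exfalso
    -- case n = m = 2: translation argument shows b = a
    rw [hn2', Int.cast_two] at hn
    rw [hm2', Int.cast_two] at hm
    have hBab2 : BF R coroot a b = BF R coroot b b := by rw [hm] at e2; linarith
    have hBba2 : BF R coroot b a = BF R coroot a a := by rw [hn] at e1; linarith
    have hww : BF R coroot (b - a) (b - a) = 0 := by
      have hexp : BF R coroot (b - a) (b - a)
          = BF R coroot b b - BF R coroot b a - BF R coroot a b + BF R coroot a a := by
        unfold BF
        rw [← Finset.sum_sub_distrib, ← Finset.sum_sub_distrib, ← Finset.sum_add_distrib]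
        exact Finset.sum_congr rfl fun δ _ => by simp only [map_sub]; ring
      rw [hexp]
      linarith
    have hker : ∀ δ ∈ R, coroot δ (b - a) = 0 := by
      intro δ hδ
      have h0 := (Finset.sum_eq_zero_iff_of_nonneg
        (fun δ _ => mul_self_nonneg (coroot δ (b - a)))).mp hww δ hδ
      exact mul_self_eq_zero.mp h0
    have hcaw : coroot a (b - a) = 0 := hker a ha
    have hcbw : coroot b (b - a) = 0 := hker b hb
    -- orbit: a + j • (2 • (b - a)) ∈ R for all j
    have horb : ∀ j : ℕ, a + (j : ℝ) • ((2:ℝ) • (b - a)) ∈ R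
        ∧ coroot a (a + (j : ℝ) • ((2:ℝ) • (b - a))) = 2
        ∧ coroot b (a + (j : ℝ) • ((2:ℝ) • (b - a))) = 2 := by
      intro j
      induction j with
      | zero => simpa using ⟨ha, hpair a ha, hm⟩
      | succ k ih =>
        obtain ⟨hx, hca, hcb⟩ := ih
        set x := a + (k : ℝ) • ((2:ℝ) • (b - a)) with hxdef
        have h1 : x - coroot a x • a ∈ R := hrefl a ha x hx
        have hcb1 : coroot b (x - coroot a x • a) = -2 := by
          rw [map_sub, map_smul, hca, hcb, hm]
          simp
          ring
        have h2 : (x - coroot a x • a) - coroot b (x - coroot a x • a) • b ∈ R :=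
          hrefl b hb _ h1
        have heq : (x - coroot a x • a) - coroot b (x - coroot a x • a) • b
            = a + ((k : ℝ) + 1) • ((2:ℝ) • (b - a)) := by
          rw [hcb1, hca, hxdef]
          module
        rw [heq] at h2
        refine ⟨by simpa [Nat.cast_succ] using h2, ?_, ?_⟩
        · rw [map_add, map_smul, map_smul, hcaw, hpair a ha]
          simp
        · rw [map_add, map_smul, map_smul, hcbw, hm]
          simp
    have hv0 : (2:ℝ) • (b - a) ≠ 0 := by
      simp only [smul_ne_zero_iff, sub_ne_zero]
      exact ⟨two_ne_zero, hne⟩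
    exact no_orbit R hv0 a (fun j => (horb j).1)

end

/-- A functional nonvanishing on a finite set of nonzero vectors. -/
lemma exists_dual_ne_zero {W : Type*} [AddCommGroup W] [Module ℝ W] [FiniteDimensional ℝ W]
    (s : Finset W) (hs : ∀ v ∈ s, v ≠ 0) : ∃ φ : W →ₗ[ℝ] ℝ, ∀ v ∈ s, φ v ≠ 0 := by
  classical
  induction s using Finset.induction_on with
  | empty => exact ⟨0, by simp⟩
  | @insert v s' hv ih =>
    obtain ⟨φ, hφ⟩ := ih (fun u hu => hs u (Finset.mem_insert_of_mem hu))
    have hv0 : v ≠ 0 := hs v (Finset.mem_insert_self _ _)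
    obtain ⟨ψ, hψ⟩ : ∃ ψ : W →ₗ[ℝ] ℝ, ψ v ≠ 0 := by
      by_contra hcon
      push_neg at hcon
      exact hv0 ((Module.forall_dual_apply_eq_zero_iff ℝ v).mp hcon)
    obtain ⟨c, hc⟩ :=
      (((insert v s').image (fun u => -(φ u) / ψ u)).finite_toSet.infinite_compl).nonempty
    refine ⟨φ + c • ψ, ?_⟩
    intro u hu hzero0
    simp only [LinearMap.add_apply, LinearMap.smul_apply, smul_eq_mul] at hzero0
    by_cases hψu : ψ u = 0
    · rcases Finset.mem_insert.mp hu with h | h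
      · exact hψ (h ▸ hψu)
      · rw [hψu, mul_zero, add_zero] at hzero0
        exact hφ u h hzero0
    · have hcval : c = -(φ u) / ψ u := by
        field_simp
        linarith
      exact (Set.mem_compl_iff _ _).mp hc
        (Finset.mem_coe.mpr (Finset.mem_image.mpr ⟨u, hu, hcval.symm⟩))

end RootSysAux

set_option maxHeartbeats 1000000 in
open RootSysAux in
/-- Let `R` be a finite reduced root system (with coroot data) in a finite-dimensional
real vector space `V`, and `R′ ⊆ R` a subset with `R′ = −R′` closed under its own
reflections.  If `R⁺` is a positive system of `R` and `α ∈ R′` is a simple root of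
`R′` with respect to `R′ ∩ R⁺`, then there is a positive system `R₁⁺` of `R` with
`R′ ∩ R₁⁺ = R′ ∩ R⁺` such that `α` is a simple root of `R` with respect to `R₁⁺`. -/
theorem exists_positive_system_making_simple
    {V : Type*} [AddCommGroup V] [Module ℝ V] [FiniteDimensional ℝ V]
    (R : Finset V) (coroot : V → V →ₗ[ℝ] ℝ)
    (hzero : (0 : V) ∉ R)
    (hpair : ∀ α ∈ R, coroot α α = 2)
    (hrefl : ∀ α ∈ R, ∀ β ∈ R, β - coroot α β • α ∈ R)
    (hint : ∀ α ∈ R, ∀ β ∈ R, ∃ n : ℤ, coroot α β = (n : ℝ))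
    (hred : ∀ α ∈ R, ∀ c : ℝ, c • α ∈ (R : Set V) → c = 1 ∨ c = -1)
    (R' : Set V) (hR'sub : R' ⊆ ↑R)
    (hR'neg : ∀ α ∈ R', -α ∈ R')
    (hR'refl : ∀ α ∈ R', ∀ β ∈ R', β - coroot α β • α ∈ R')
    (P : Set V) (hP : IsPositiveSystem (↑R) P)
    (α : V) (hα : α ∈ R') (hαs : IsSimpleRoot (R' ∩ P) α) :
    ∃ P₁ : Set V, IsPositiveSystem (↑R) P₁ ∧ R' ∩ P₁ = R' ∩ P ∧ IsSimpleRoot P₁ α := by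
  classical
  obtain ⟨f, hf0, hfP⟩ := hP
  have hαR : α ∈ R := hR'sub hα
  have hPmem : ∀ x, x ∈ P ↔ x ∈ (R : Set V) ∧ 0 < f x := by
    intro x; rw [hfP]; exact Set.mem_sep_iff
  have hαP : α ∈ P := hαs.1.2
  have hfα : 0 < f α := ((hPmem α).mp hαP).2
  have hdecomp : ∀ x ∈ R', ∀ y ∈ R', 0 < f x → 0 < f y → α = x + y → False := by
    intro x hx y hy hfx hfy heq
    exact hαs.2 ⟨x, ⟨hx, (hPmem x).mpr ⟨hR'sub hx, hfx⟩⟩,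
      y, ⟨hy, (hPmem y).mpr ⟨hR'sub hy, hfy⟩⟩, heq⟩
  have h2α : (2:ℝ) • α ∉ (R : Set V) := by
    intro hmem
    rcases hred α hαR 2 hmem with h | h <;> norm_num at h
  -- Step II : the reflection in α preserves the positive part of R' away from α
  have hgood : ∀ β, β ∈ R' → 0 < f β → β ≠ α → 0 < f (β - coroot α β • α) := by
    by_contra hcon
    push_neg at hcon
    obtain ⟨β₀, hβ₀R', hβ₀f, hβ₀α, hβ₀bad⟩ := hcon
    set Bad := R.filter
      (fun β => β ∈ R' ∧ 0 < f β ∧ β ≠ α ∧ f (β - coroot α β • α) ≤ 0) with hBadDef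
    have hBadne : Bad.Nonempty :=
      ⟨β₀, Finset.mem_filter.mpr ⟨hR'sub hβ₀R', hβ₀R', hβ₀f, hβ₀α, hβ₀bad⟩⟩
    obtain ⟨β, hβBad, hβmin⟩ := Finset.exists_min_image Bad f hBadne
    obtain ⟨hβR, hβR', hβf, hβα, hβbad⟩ := Finset.mem_filter.mp hβBad
    have hsβ : β - coroot α β • α ∈ R' := hR'refl α hα β hβR'
    have hfsβ : f (β - coroot α β • α) < 0 :=
      lt_of_le_of_ne hβbad (hf0 _ (hR'sub hsβ))
    have hfs : f β - coroot α β * f α < 0 := by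
      simpa [map_sub, map_smul, smul_eq_mul] using hfsβ
    obtain ⟨n, hn⟩ := hint α hαR β (hR'sub hβR')
    have hn1 : 1 ≤ n := by
      have h0 : (0:ℝ) < (n:ℝ) := by rw [← hn]; nlinarith
      have : (0:ℤ) < n := by exact_mod_cast h0
      omega
    by_cases hone : n = 1
    · have hln : coroot α β = 1 := by rw [hn, hone]; norm_num
      rw [hln, one_smul] at hsβ hfsβ
      have hmem : α - β ∈ R' := by simpa [neg_sub] using hR'neg _ hsβ
      have hfαβ : 0 < f (α - β) := by
        have h1 : f (α - β) = - f (β - α) := by rw [← neg_sub β α, map_neg]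
        rw [h1]; linarith
      exact hdecomp β hβR' (α - β) hmem hβf hfαβ (by abel)
    · have hn2 : (2:ℝ) ≤ coroot α β := by
        rw [hn]; exact_mod_cast (by omega : (2:ℤ) ≤ n)
      have hm : coroot β α = 1 :=
        RootSysAux.pairing_one hzero hpair hrefl hint hαR (hR'sub hβR') hβα hn2
      have hδ'R' : α - β ∈ R' := by
        have h1 := hR'refl β hβR' α hα
        rw [hm, one_smul] at h1; exact h1
      have hδR' : β - α ∈ R' := by simpa [neg_sub] using hR'neg _ hδ'R'
      have hfδ0 : f (β - α) ≠ 0 := hf0 _ (hR'sub hδR')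
      rcases hfδ0.lt_or_gt with hneg | hpos
      · have hfαβ : 0 < f (α - β) := by
          have h1 : f (α - β) = - f (β - α) := by rw [← neg_sub β α, map_neg]
          rw [h1]; linarith
        exact hdecomp β hβR' (α - β) hδ'R' hβf hfαβ (by abel)
      · have hδα : β - α ≠ α := by
          intro hc
          have hβ2 : β = (2:ℝ) • α := by
            rw [two_smul]
            exact sub_eq_iff_eq_add.mp hc
          exact h2α (hβ2 ▸ (Finset.mem_coe.mpr hβR))
        have hδnotbad : (β - α) ∉ Bad := by
          intro hbad
          have h1 := hβmin _ hbad
          have hlt : f (β - α) < f β := by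
            rw [map_sub]; linarith
          linarith
        have h5 : 0 < f ((β - α) - coroot α (β - α) • α) := by
          by_contra hle
          push_neg at hle
          exact hδnotbad (Finset.mem_filter.mpr
            ⟨hR'sub hδR', hδR', hpos, hδα, hle⟩)
        have hsδR' : (β - α) - coroot α (β - α) • α ∈ R' := hR'refl α hα _ hδR'
        have hzR' : coroot α β • α - β ∈ R' := by simpa [neg_sub] using hR'neg _ hsβ
        have hfz : 0 < f (coroot α β • α - β) := by
          have h1 : f (coroot α β • α - β) = - f (β - coroot α β • α) := by
            rw [← neg_sub β (coroot α β • α), map_neg]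
          rw [h1]; linarith
        refine hdecomp _ hzR' _ hsδR' hfz h5 ?_
        have hca : coroot α (β - α) = coroot α β - 2 := by
          rw [map_sub, hpair α hαR]
        rw [hca]
        module
  -- Step III : the functional g = f + f ∘ s_α
  set g : V →ₗ[ℝ] ℝ := f + f.comp (reflMap (coroot α) α) with hgdef
  have hgapp : ∀ x, g x = f x + f (x - coroot α x • α) := fun x => rfl
  have hgα : g α = 0 := by
    rw [hgapp, hpair α hαR]
    have h1 : α - (2:ℝ) • α = -α := by module
    rw [h1, map_neg]; ring
  have hgpos : ∀ β, β ∈ R' → 0 < f β → β ≠ α → 0 < g β := by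
    intro β hβ hf hne
    have h1 := hgood β hβ hf hne
    rw [hgapp]; linarith
  -- Step IV : generic perturbation h
  have hQne : ∀ v ∈ (R.filter (fun β => β ≠ α ∧ β ≠ -α)).image (Submodule.mkQ (ℝ ∙ α)),
      v ≠ 0 := by
    intro v hv
    obtain ⟨β, hβ, rfl⟩ := Finset.mem_image.mp hv
    obtain ⟨hβR, hβ1, hβ2⟩ := by exact Finset.mem_filter.mp hβ
    intro h0
    have hmem : β ∈ (ℝ ∙ α) := (Submodule.Quotient.mk_eq_zero _).mp h0
    obtain ⟨c, hc⟩ := Submodule.mem_span_singleton.mp hmem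
    rcases hred α hαR c (by rw [hc]; exact Finset.mem_coe.mpr hβR) with h | h
    · exact hβ1 (by rw [← hc, h, one_smul])
    · exact hβ2 (by rw [← hc, h, neg_one_smul])
  obtain ⟨φq, hφq⟩ := RootSysAux.exists_dual_ne_zero _ hQne
  set h : V →ₗ[ℝ] ℝ := φq.comp (Submodule.mkQ (ℝ ∙ α)) with hhdef
  have hhα : h α = 0 := by
    have h1 : Submodule.mkQ (ℝ ∙ α) α = 0 := by
      rw [Submodule.mkQ_apply, Submodule.Quotient.mk_eq_zero]
      exact Submodule.mem_span_singleton_self α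
    simp [hhdef, h1]
  have hh : ∀ β ∈ R, β ≠ α → β ≠ -α → h β ≠ 0 := by
    intro β hβ h1 h2
    exact hφq _ (Finset.mem_image.mpr ⟨β, Finset.mem_filter.mpr ⟨hβ, h1, h2⟩, rfl⟩)
  -- choose small generic t
  set Pos := R.filter (fun β => β ∈ R' ∧ 0 < f β ∧ β ≠ α) with hPosDef
  set t₀ : ℝ := if hp : Pos.Nonempty then Pos.inf' hp (fun β => g β / (|h β| + 1)) else 1
    with ht₀def
  have ht₀ : 0 < t₀ := by
    rw [ht₀def]
    split
    · rename_i hp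
      rw [Finset.lt_inf'_iff]
      intro β hβ
      obtain ⟨hβR, hβR', hβf, hβα⟩ := Finset.mem_filter.mp hβ
      exact div_pos (hgpos β hβR' hβf hβα) (by positivity)
    · norm_num
  have ht₀le : ∀ β ∈ Pos, t₀ ≤ g β / (|h β| + 1) := by
    intro β hβ
    rw [ht₀def, dif_pos ⟨β, hβ⟩]
    exact Finset.inf'_le _ hβ
  obtain ⟨t, ht⟩ :=
    ((Set.Ioo_infinite ht₀).diff
      (((R.filter (fun β => β ≠ α ∧ β ≠ -α)).image (fun β => -(g β) / h β)).finite_toSet)).nonempty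
  obtain ⟨⟨ht1, ht2⟩, htB⟩ := ht
  set g' : V →ₗ[ℝ] ℝ := g + t • h with hg'def
  have hg'app : ∀ x, g' x = g x + t * h x := fun x => rfl
  have hg'α : g' α = 0 := by rw [hg'app, hgα, hhα]; ring
  have hg'pos : ∀ β, β ∈ R' → 0 < f β → β ≠ α → 0 < g' β := by
    intro β hβ hf hne
    have hβPos : β ∈ Pos := Finset.mem_filter.mpr ⟨hR'sub hβ, hβ, hf, hne⟩
    have hle := ht₀le β hβPos
    have h2 : t₀ * (|h β| + 1) ≤ g β := by
      rw [le_div_iff₀ (by positivity)] at hle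
      linarith
    have h3 : -(t * |h β|) ≤ t * h β := by
      have := mul_le_mul_of_nonneg_left (neg_abs_le (h β)) ht1.le
      linarith [this]
    have h4 : t * |h β| < t₀ * (|h β| + 1) := by
      have := mul_le_mul_of_nonneg_right ht2.le (abs_nonneg (h β))
      nlinarith [ht₀]
    rw [hg'app]; linarith
  have hg'ne : ∀ β ∈ R, β ≠ α → β ≠ -α → g' β ≠ 0 := by
    intro β hβ h1 h2 h0
    have hhβ : h β ≠ 0 := hh β hβ h1 h2
    rw [hg'app] at h0
    have hval : t = -(g β) / h β := by
      field_simp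
      linarith
    exact htB (Finset.mem_coe.mpr (Finset.mem_image.mpr
      ⟨β, Finset.mem_filter.mpr ⟨hβ, h1, h2⟩, hval.symm⟩))
  -- Step V : small ε
  set F := R.filter (fun β => β ≠ α ∧ β ≠ -α) with hFdef
  set ε : ℝ := if hp : F.Nonempty then F.inf' hp (fun β => |g' β| / (|f β| + 1)) else 1
    with hεdef
  have hε : 0 < ε := by
    rw [hεdef]
    split
    · rename_i hp
      rw [Finset.lt_inf'_iff]
      intro β hβ
      obtain ⟨hβR, hβ1, hβ2⟩ := Finset.mem_filter.mp hβ
      have := hg'ne β hβR hβ1 hβ2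
      exact div_pos (abs_pos.mpr this) (by positivity)
    · norm_num
  have hεlt : ∀ β ∈ R, β ≠ α → β ≠ -α → ε * |f β| < |g' β| := by
    intro β hβR hβ1 hβ2
    have hβF : β ∈ F := Finset.mem_filter.mpr ⟨hβR, hβ1, hβ2⟩
    have h1 : ε ≤ |g' β| / (|f β| + 1) := by
      rw [hεdef, dif_pos ⟨β, hβF⟩]
      exact Finset.inf'_le _ hβF
    rw [le_div_iff₀ (by positivity)] at h1
    nlinarith [abs_nonneg (f β), hε]
  set f₁ : V →ₗ[ℝ] ℝ := g' + ε • f with hf₁def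
  have hf₁app : ∀ x, f₁ x = g' x + ε * f x := fun x => rfl
  have hf₁α : f₁ α = ε * f α := by rw [hf₁app, hg'α]; ring
  have hsignpos : ∀ β ∈ R, β ≠ α → β ≠ -α → (0 < f₁ β ↔ 0 < g' β) := by
    intro β hβR h1 h2
    have hlt := hεlt β hβR h1 h2
    have hne := hg'ne β hβR h1 h2
    rw [hf₁app]
    rcases hne.lt_or_gt with hg | hg
    · constructor
      · intro hp
        exfalso
        have ha := abs_of_neg hg
        have hb := mul_le_mul_of_nonneg_left (le_abs_self (f β)) hε.le
        linarith
      · intro hp; linarith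
    · constructor
      · intro _; exact hg
      · intro _
        have ha := abs_of_pos hg
        have hb := mul_le_mul_of_nonneg_left (neg_abs_le (f β)) hε.le
        linarith
  have hf₁ne : ∀ β ∈ R, f₁ β ≠ 0 := by
    intro β hβR
    by_cases h1 : β = α
    · rw [h1, hf₁α]; positivity
    by_cases h2 : β = -α
    · rw [h2, map_neg, hf₁α]
      have : 0 < ε * f α := by positivity
      intro hc
      rw [neg_eq_zero] at hc
      rw [hc] at this
      exact lt_irrefl 0 this
    · intro h0
      have hlt := hεlt β hβR h1 h2
      have : |g' β| = ε * |f β| := by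
        rw [hf₁app] at h0
        have : g' β = -(ε * f β) := by linarith
        rw [this, abs_neg, abs_mul, abs_of_pos hε]
      linarith
  refine ⟨{β ∈ (R : Set V) | 0 < f₁ β}, ⟨f₁, hf₁ne, rfl⟩, ?_, ?_, ?_⟩
  · -- R' ∩ P₁ = R' ∩ P
    ext x
    simp only [Set.mem_inter_iff, Set.mem_sep_iff]
    constructor
    · rintro ⟨hxR', hxR, hxf₁⟩
      refine ⟨hxR', (hPmem x).mpr ⟨hxR, ?_⟩⟩
      by_cases h1 : x = α
      · rw [h1]; exact hfα
      by_cases h2 : x = -α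
      · exfalso
        rw [h2, map_neg, hf₁α] at hxf₁
        have hpos : 0 < ε * f α := by positivity
        linarith
      · by_contra hng
        have hxf : f x < 0 := lt_of_le_of_ne (not_lt.mp hng) (hf0 x hxR)
        have hnx : -x ∈ R' := hR'neg x hxR'
        have hfnx : 0 < f (-x) := by rw [map_neg]; linarith
        have hnxα : -x ≠ α := fun hc => h2 (by rw [← hc, neg_neg])
        have hgnx := hg'pos (-x) hnx hfnx hnxα
        have hgx : g' x < 0 := by rw [map_neg] at hgnx; linarith
        have := (hsignpos x (Finset.mem_coe.mp hxR) h1 h2).mp hxf₁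
        linarith
    · rintro ⟨hxR', hxP⟩
      obtain ⟨hxR, hxf⟩ := (hPmem x).mp hxP
      refine ⟨hxR', hxR, ?_⟩
      by_cases h1 : x = α
      · rw [h1, hf₁α]; positivity
      · have h2 : x ≠ -α := by
          intro hc
          rw [hc, map_neg] at hxf
          linarith
        exact ((hsignpos x (Finset.mem_coe.mp hxR) h1 h2)).mpr
          (hg'pos x hxR' hxf h1)
  · -- α ∈ P₁
    exact ⟨Finset.mem_coe.mpr hαR, by rw [hf₁α]; positivity⟩
  · -- no decomposition
    rintro ⟨x, ⟨hxR, hxf₁⟩, y, ⟨hyR, hyf₁⟩, hxy⟩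
    by_cases h1 : x = α
    · rw [h1] at hxy
      have hy0 : y = 0 := left_eq_add.mp hxy
      rw [hy0] at hyR
      exact hzero (Finset.mem_coe.mp hyR)
    by_cases h2 : x = -α
    · rw [h2] at hxy
      have hy2 : y = (2:ℝ) • α := by
        rw [two_smul]
        exact add_left_cancel (a := -α) (show -α + y = -α + (α + α) by rw [← hxy]; abel)
      exact h2α (by rw [← hy2]; exact hyR)
    by_cases h3 : y = α
    · rw [h3] at hxy
      have hx0 : x = 0 := right_eq_add.mp hxy
      rw [hx0] at hxR
      exact hzero (Finset.mem_coe.mp hxR)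
    by_cases h4 : y = -α
    · rw [h4] at hxy
      have hx2 : x = (2:ℝ) • α := by
        rw [two_smul]
        exact add_right_cancel (b := -α) (show x + -α = (α + α) + -α by rw [← hxy]; abel)
      exact h2α (by rw [← hx2]; exact hxR)
    · have hsum : g' x + g' y = 0 := by
        have h5 := congrArg g' hxy
        rw [map_add, hg'α] at h5
        linarith
      have hx' := (hsignpos x (Finset.mem_coe.mp hxR) h1 h2).mp hxf₁
      have hy' := (hsignpos y (Finset.mem_coe.mp hyR) h3 h4).mp hyf₁
      linarith
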